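/- arXiv:0805.4502 — 3 statements merged into one kernel-verified Lean document; each statement's English description precedes it below -/
import Mathlib

section
/- The element γ = i is not a norm in the extension ℚ(i,θ)/ℚ(i), where θ = (1+√5)/2; consequently the cyclic algebra (ℚ(i,θ)/ℚ(i), σ, i) is a division algebra. -/
/-!
Write `x = α + βθ` with `α, β ∈ ℚ(i)`; then `N(x) = α² + αβ - β²`, and `4 N(x) = (2α + β)² - 5β²`.
After clearing denominators, a solution of `X² - 5Y² = i (Z² - 5W²)` in `ℤ[i]` becomes
`X² = r Z²` under each of the two maps `ℤ[i] → 𝔽₅` sending `i` to a root `r ∈ {2, 3}` of `-1`.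
As `r` is not a square in `𝔽₅`, both maps kill `X` and `Z`, so `5 ∣ X, Z`; dividing out, also
`5 ∣ Y, W`, and infinite descent leaves only the zero solution. Hence `N(x) = i N(y)` forces
`x = y = 0`. With `y = 1` this says that `i` is not a norm. It also says that the determinant
`N(x₁) - i N(x₂)` of a nonzero element of `𝒜` is nonzero, and the inverse matrix `det⁻¹ • adj`
lies in `𝒜` again because `det⁻¹ ∈ ℚ(i)` is fixed by `σ`.
-/

open Matrix

/-- The golden number θ = (1+√5)/2, as a complex number. -/
noncomputable def gold : ℂ := (1 + Real.sqrt 5) / 2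

/-- The element `a + bθ + i(c + dθ)` of `ℚ(i,θ)` (with rational `a,b,c,d`). -/
noncomputable def qelt (a b c d : ℚ) : ℂ :=
  (a : ℂ) + b * gold + Complex.I * ((c : ℂ) + d * gold)

/-- Its conjugate under `σ : θ ↦ 1 − θ`. -/
noncomputable def qeltBar (a b c d : ℚ) : ℂ :=
  (a : ℂ) + b * (1 - gold) + Complex.I * ((c : ℂ) + d * (1 - gold))

/-- The matrix `[[x₁, x₂], [i·σ(x₂), σ(x₁)]]` of the quaternion algebra
`𝒜 = (ℚ(i,θ)/ℚ(i), σ, i)`, with `x₁ = a + bθ + i(c+dθ)`, `x₂ = e + fθ + i(g+hθ)`. -/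
noncomputable def qmatA (a b c d e f g h : ℚ) : Matrix (Fin 2) (Fin 2) ℂ :=
  !![qelt a b c d, qelt e f g h;
     Complex.I * qeltBar e f g h, qeltBar a b c d]

open Complex

local notation "ℤ[i]" => GaussianInt

lemma sq_eq_mul_sq_zmod_five :
    ∀ r x z : ZMod 5, r * r = -1 → x ^ 2 = r * z ^ 2 → x = 0 ∧ z = 0 := by
  decide

namespace GaussianInt

lemma map_eq_zero_of_sq_sub_five_mul_sq_eq {X Y Z W : ℤ[i]}
    (h : X ^ 2 - 5 * Y ^ 2 = Zsqrtd.sqrtd * (Z ^ 2 - 5 * W ^ 2)) (φ : ℤ[i] →+* ZMod 5) :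
    φ X = 0 ∧ φ Z = 0 := by
  have hi : φ Zsqrtd.sqrtd * φ Zsqrtd.sqrtd = -1 := by
    rw [← map_mul, Zsqrtd.dmuld]; simp
  have h5 : φ 5 = 0 := by rw [map_ofNat]; rfl
  have hφ := congrArg φ h
  simp only [map_sub, map_mul, map_pow, h5, zero_mul, sub_zero] at hφ
  exact sq_eq_mul_sq_zmod_five _ _ _ hi hφ

lemma five_dvd_of_forall_map_eq_zero {X : ℤ[i]} (h : ∀ φ : ℤ[i] →+* ZMod 5, φ X = 0) :
    5 ∣ X := by
  have h₂ := h (Zsqrtd.lift ⟨2, by decide⟩)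
  have h₃ := h (Zsqrtd.lift ⟨3, by decide⟩)
  simp only [Zsqrtd.lift_apply_apply] at h₂ h₃
  have him : ((X.im : ℤ) : ZMod 5) = 0 := by linear_combination h₃ - h₂
  have hre : ((X.re : ℤ) : ZMod 5) = 0 := by linear_combination 3 * h₂ - 2 * h₃
  rw [ZMod.intCast_zmod_eq_zero_iff_dvd] at him hre
  exact (Zsqrtd.intCast_dvd 5 X).mpr ⟨by exact_mod_cast hre, by exact_mod_cast him⟩

lemma exists_five_mul_of_sq_sub_five_mul_sq_eq {X Y Z W : ℤ[i]}
    (h : X ^ 2 - 5 * Y ^ 2 = Zsqrtd.sqrtd * (Z ^ 2 - 5 * W ^ 2)) :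
    ∃ X' Y' Z' W', X = 5 * X' ∧ Y = 5 * Y' ∧ Z = 5 * Z' ∧ W = 5 * W' ∧
      X' ^ 2 - 5 * Y' ^ 2 = Zsqrtd.sqrtd * (Z' ^ 2 - 5 * W' ^ 2) := by
  have h5 : (5 : ℤ[i]) ≠ 0 := by decide
  obtain ⟨X', rfl⟩ := five_dvd_of_forall_map_eq_zero fun φ ↦
    (map_eq_zero_of_sq_sub_five_mul_sq_eq h φ).1
  obtain ⟨Z', rfl⟩ := five_dvd_of_forall_map_eq_zero fun φ ↦
    (map_eq_zero_of_sq_sub_five_mul_sq_eq h φ).2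
  have h' : Y ^ 2 - 5 * X' ^ 2 = Zsqrtd.sqrtd * (W ^ 2 - 5 * Z' ^ 2) :=
    mul_left_cancel₀ h5 (by linear_combination -h)
  obtain ⟨Y', rfl⟩ := five_dvd_of_forall_map_eq_zero fun φ ↦
    (map_eq_zero_of_sq_sub_five_mul_sq_eq h' φ).1
  obtain ⟨W', rfl⟩ := five_dvd_of_forall_map_eq_zero fun φ ↦
    (map_eq_zero_of_sq_sub_five_mul_sq_eq h' φ).2
  exact ⟨X', Y', Z', W', rfl, rfl, rfl, rfl, mul_left_cancel₀ h5 (by linear_combination -h')⟩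

lemma five_pow_dvd_of_sq_sub_five_mul_sq_eq (k : ℕ) {X Y Z W : ℤ[i]}
    (h : X ^ 2 - 5 * Y ^ 2 = Zsqrtd.sqrtd * (Z ^ 2 - 5 * W ^ 2)) :
    5 ^ k ∣ X ∧ 5 ^ k ∣ Y ∧ 5 ^ k ∣ Z ∧ 5 ^ k ∣ W := by
  induction k generalizing X Y Z W with
  | zero => simp
  | succ k ih =>
    obtain ⟨X', Y', Z', W', rfl, rfl, rfl, rfl, h'⟩ := exists_five_mul_of_sq_sub_five_mul_sq_eq h
    obtain ⟨hX, hY, hZ, hW⟩ := ih h'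
    simp only [pow_succ']
    exact ⟨mul_dvd_mul_left 5 hX, mul_dvd_mul_left 5 hY, mul_dvd_mul_left 5 hZ,
      mul_dvd_mul_left 5 hW⟩

lemma eq_zero_of_forall_five_pow_dvd {X : ℤ[i]} (h : ∀ k, 5 ^ k ∣ X) : X = 0 := by
  by_contra hX
  have h5 : ¬IsUnit (5 : ℤ[i]) := by
    rw [Zsqrtd.isUnit_iff_norm_isUnit, Int.isUnit_iff]; decide
  obtain ⟨k, hk⟩ := FiniteMultiplicity.of_not_isUnit h5 hX
  exact hk (h (k + 1))

lemma eq_zero_of_sq_sub_five_mul_sq_eq_sqrtd_mul {X Y Z W : ℤ[i]}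
    (h : X ^ 2 - 5 * Y ^ 2 = Zsqrtd.sqrtd * (Z ^ 2 - 5 * W ^ 2)) :
    X = 0 ∧ Y = 0 ∧ Z = 0 ∧ W = 0 :=
  ⟨eq_zero_of_forall_five_pow_dvd fun k ↦ (five_pow_dvd_of_sq_sub_five_mul_sq_eq k h).1,
    eq_zero_of_forall_five_pow_dvd fun k ↦ (five_pow_dvd_of_sq_sub_five_mul_sq_eq k h).2.1,
    eq_zero_of_forall_five_pow_dvd fun k ↦ (five_pow_dvd_of_sq_sub_five_mul_sq_eq k h).2.2.1,
    eq_zero_of_forall_five_pow_dvd fun k ↦ (five_pow_dvd_of_sq_sub_five_mul_sq_eq k h).2.2.2⟩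

end GaussianInt

def gaussianRationals : Subfield ℂ where
  carrier := {z | ∃ p q : ℚ, z = p + q * I}
  zero_mem' := ⟨0, 0, by simp⟩
  one_mem' := ⟨1, 0, by simp⟩
  add_mem' := by
    rintro _ _ ⟨p, q, rfl⟩ ⟨p', q', rfl⟩
    exact ⟨p + p', q + q', by push_cast; ring⟩
  neg_mem' := by
    rintro _ ⟨p, q, rfl⟩
    exact ⟨-p, -q, by push_cast; ring⟩
  mul_mem' := by
    rintro _ _ ⟨p, q, rfl⟩ ⟨p', q', rfl⟩
    exact ⟨p * p' - q * q', p * q' + q * p', by push_cast; linear_combination (q * q' : ℂ) * I_sq⟩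
  inv_mem' := by
    rintro _ ⟨p, q, rfl⟩
    refine ⟨p / (p ^ 2 + q ^ 2), -q / (p ^ 2 + q ^ 2), ?_⟩
    rcases eq_or_ne (p ^ 2 + q ^ 2) 0 with h | h
    · obtain rfl : p = 0 := by nlinarith [sq_nonneg p, sq_nonneg q]
      obtain rfl : q = 0 := by nlinarith [sq_nonneg q]
      simp
    · have h' : (p : ℂ) ^ 2 + q ^ 2 ≠ 0 := by exact_mod_cast h
      refine inv_eq_of_mul_eq_one_right ?_
      push_cast
      field_simp
      linear_combination (-(q : ℂ) ^ 2) * I_sq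

lemma mem_gaussianRationals {z : ℂ} : z ∈ gaussianRationals ↔ ∃ p q : ℚ, z = p + q * I :=
  Iff.rfl

lemma ratCast_add_ratCast_mul_I_mem (p q : ℚ) : (p : ℂ) + q * I ∈ gaussianRationals :=
  ⟨p, q, rfl⟩

lemma I_mem_gaussianRationals : I ∈ gaussianRationals :=
  ⟨0, 1, by simp⟩

lemma exists_natCast_mul_mem_range (s : Finset ℂ) (hs : ∀ z ∈ s, z ∈ gaussianRationals) :
    ∃ n : ℕ, n ≠ 0 ∧ ∀ z ∈ s, (n : ℂ) * z ∈ GaussianInt.toComplex.range := by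
  induction s using Finset.induction_on with
  | empty => exact ⟨1, one_ne_zero, by simp⟩
  | insert z s _ ih =>
    obtain ⟨n, hn, hns⟩ := ih fun w hw ↦ hs w (Finset.mem_insert_of_mem hw)
    obtain ⟨p, q, rfl⟩ := hs z (Finset.mem_insert_self z s)
    have hz : ((p.den * q.den : ℕ) : ℂ) * (p + q * I) ∈ GaussianInt.toComplex.range :=
      ⟨⟨p.num * q.den, q.num * p.den⟩, by
        have hp : (p : ℂ) * p.den = p.num := by exact_mod_cast Rat.mul_den_eq_num p
        have hq : (q : ℂ) * q.den = q.num := by exact_mod_cast Rat.mul_den_eq_num q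
        rw [GaussianInt.toComplex_def']; push_cast
        linear_combination (-(q.den : ℂ)) * hp - (p.den * I) * hq⟩
    refine ⟨n * (p.den * q.den), mul_ne_zero hn (by positivity), ?_⟩
    intro w hw
    rcases Finset.mem_insert.mp hw with rfl | hw
    · simpa [mul_assoc, mul_comm, mul_left_comm] using
        Subring.mul_mem _ (natCast_mem _ n) hz
    · simpa [mul_assoc, mul_comm, mul_left_comm] using
        Subring.mul_mem _ (natCast_mem _ (p.den * q.den)) (hns w hw)

lemma eq_zero_of_sq_sub_five_mul_sq_eq_I_mul {x y z w : ℂ} (hx : x ∈ gaussianRationals)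
    (hy : y ∈ gaussianRationals) (hz : z ∈ gaussianRationals) (hw : w ∈ gaussianRationals)
    (h : x ^ 2 - 5 * y ^ 2 = I * (z ^ 2 - 5 * w ^ 2)) : x = 0 ∧ y = 0 ∧ z = 0 ∧ w = 0 := by
  obtain ⟨n, hn, hs⟩ := exists_natCast_mul_mem_range {x, y, z, w} (by simp [hx, hy, hz, hw])
  obtain ⟨X, hX⟩ := hs x (by simp)
  obtain ⟨Y, hY⟩ := hs y (by simp)
  obtain ⟨Z, hZ⟩ := hs z (by simp)
  obtain ⟨W, hW⟩ := hs w (by simp)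
  have hsqrtd : GaussianInt.toComplex Zsqrtd.sqrtd = I := by simp [GaussianInt.toComplex_def]
  have hXYZW : X ^ 2 - 5 * Y ^ 2 = Zsqrtd.sqrtd * (Z ^ 2 - 5 * W ^ 2) := by
    apply GaussianInt.toComplex_injective
    simp only [map_sub, map_mul, map_pow, map_ofNat, hX, hY, hZ, hW, hsqrtd]
    linear_combination (n : ℂ) ^ 2 * h
  have hn : (n : ℂ) ≠ 0 := Nat.cast_ne_zero.mpr hn
  obtain ⟨rfl, rfl, rfl, rfl⟩ := GaussianInt.eq_zero_of_sq_sub_five_mul_sq_eq_sqrtd_mul hXYZW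
  simp only [map_zero, zero_eq_mul, hn, false_or] at hX hY hZ hW
  exact ⟨hX, hY, hZ, hW⟩

lemma eq_zero_of_sq_add_mul_sub_sq_eq_I_mul {α β γ δ : ℂ} (hα : α ∈ gaussianRationals)
    (hβ : β ∈ gaussianRationals) (hγ : γ ∈ gaussianRationals) (hδ : δ ∈ gaussianRationals)
    (h : α ^ 2 + α * β - β ^ 2 = I * (γ ^ 2 + γ * δ - δ ^ 2)) :
    α = 0 ∧ β = 0 ∧ γ = 0 ∧ δ = 0 := by
  have two_mul_add_mem {x y : ℂ} (hx : x ∈ gaussianRationals) (hy : y ∈ gaussianRationals) :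
      2 * x + y ∈ gaussianRationals :=
    add_mem (mul_mem (ofNat_mem _ 2) hx) hy
  obtain ⟨hαβ, rfl, hγδ, rfl⟩ := eq_zero_of_sq_sub_five_mul_sq_eq_I_mul
    (two_mul_add_mem hα hβ) hβ (two_mul_add_mem hγ hδ) hδ (by linear_combination 4 * h)
  exact ⟨by linear_combination hαβ / 2, rfl, by linear_combination hγδ / 2, rfl⟩

lemma add_mul_mul_add_mul_one_sub {R : Type*} [CommRing R] {t : R} (ht : t ^ 2 = t + 1)
    (a b : R) : (a + b * t) * (a + b * (1 - t)) = a ^ 2 + a * b - b ^ 2 := by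
  linear_combination (-b ^ 2) * ht

lemma gold_sq : gold ^ 2 = gold + 1 := by
  have h5 : (Real.sqrt 5 : ℂ) ^ 2 = 5 := by
    exact_mod_cast Real.sq_sqrt (by norm_num : (0 : ℝ) ≤ 5)
  unfold gold
  linear_combination h5 / 4

lemma qelt_eq (a b c d : ℚ) : qelt a b c d = (a + c * I) + (b + d * I) * gold := by
  unfold qelt; ring

lemma qeltBar_eq (a b c d : ℚ) : qeltBar a b c d = (a + c * I) + (b + d * I) * (1 - gold) := by
  unfold qeltBar; ring

lemma qelt_mul_qeltBar (a b c d : ℚ) :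
    qelt a b c d * qeltBar a b c d =
      (a + c * I) ^ 2 + (a + c * I) * (b + d * I) - (b + d * I) ^ 2 := by
  rw [qelt_eq, qeltBar_eq, add_mul_mul_add_mul_one_sub gold_sq]

lemma det_qmatA (a b c d e f g h : ℚ) :
    (qmatA a b c d e f g h).det =
      ((a + c * I) ^ 2 + (a + c * I) * (b + d * I) - (b + d * I) ^ 2) -
        I * ((e + g * I) ^ 2 + (e + g * I) * (f + h * I) - (f + h * I) ^ 2) := by
  rw [qmatA, det_fin_two_of, mul_left_comm, qelt_mul_qeltBar, qelt_mul_qeltBar]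

lemma det_qmatA_mem (a b c d e f g h : ℚ) :
    (qmatA a b c d e f g h).det ∈ gaussianRationals := by
  rw [det_qmatA]
  have hα := ratCast_add_ratCast_mul_I_mem a c
  have hβ := ratCast_add_ratCast_mul_I_mem b d
  have hγ := ratCast_add_ratCast_mul_I_mem e g
  have hδ := ratCast_add_ratCast_mul_I_mem f h
  have hN {x y : ℂ} (hx : x ∈ gaussianRationals) (hy : y ∈ gaussianRationals) :
      x ^ 2 + x * y - y ^ 2 ∈ gaussianRationals :=
    sub_mem (add_mem (pow_mem hx 2) (mul_mem hx hy)) (pow_mem hy 2)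
  exact sub_mem (hN hα hβ) (mul_mem I_mem_gaussianRationals (hN hγ hδ))

lemma det_qmatA_ne_zero {a b c d e f g h : ℚ} (hM : qmatA a b c d e f g h ≠ 0) :
    (qmatA a b c d e f g h).det ≠ 0 := by
  intro h0
  rw [det_qmatA, sub_eq_zero] at h0
  obtain ⟨hα, hβ, hγ, hδ⟩ := eq_zero_of_sq_add_mul_sub_sq_eq_I_mul
    (ratCast_add_ratCast_mul_I_mem a c) (ratCast_add_ratCast_mul_I_mem b d)
    (ratCast_add_ratCast_mul_I_mem e g) (ratCast_add_ratCast_mul_I_mem f h) h0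
  apply hM
  rw [qmatA, qelt_eq, qelt_eq, qeltBar_eq, qeltBar_eq, hα, hβ, hγ, hδ]
  ext i j
  fin_cases i <;> fin_cases j <;> simp

lemma adjugate_qmatA (a b c d e f g h : ℚ) :
    (qmatA a b c d e f g h).adjugate = qmatA (a + b) (-b) (c + d) (-d) (-e) (-f) (-g) (-h) := by
  rw [qmatA, qmatA, adjugate_fin_two_of]
  ext i j
  fin_cases i <;> fin_cases j <;> simp [qelt, qeltBar] <;> ring

lemma mul_qelt (r s a b c d : ℚ) :
    ((r : ℂ) + s * I) * qelt a b c d =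
      qelt (r * a - s * c) (r * b - s * d) (r * c + s * a) (r * d + s * b) := by
  simp only [qelt]; push_cast; linear_combination (s * (c + d * gold) : ℂ) * I_sq

lemma mul_qeltBar (r s a b c d : ℚ) :
    ((r : ℂ) + s * I) * qeltBar a b c d =
      qeltBar (r * a - s * c) (r * b - s * d) (r * c + s * a) (r * d + s * b) := by
  simp only [qeltBar]; push_cast; linear_combination (s * (c + d * (1 - gold)) : ℂ) * I_sq

lemma smul_qmatA (r s a b c d e f g h : ℚ) :
    ((r : ℂ) + s * I) • qmatA a b c d e f g h =
      qmatA (r * a - s * c) (r * b - s * d) (r * c + s * a) (r * d + s * b)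
        (r * e - s * g) (r * f - s * h) (r * g + s * e) (r * h + s * f) := by
  ext i j
  fin_cases i <;> fin_cases j <;>
    simp [qmatA, ← mul_qelt, ← mul_qeltBar, mul_left_comm]

lemma exists_qmatA_eq_inv (a b c d e f g h : ℚ) : ∃ a' b' c' d' e' f' g' h' : ℚ,
    (qmatA a b c d e f g h)⁻¹ = qmatA a' b' c' d' e' f' g' h' := by
  obtain ⟨r, s, hrs⟩ := mem_gaussianRationals.mp (inv_mem (det_qmatA_mem a b c d e f g h))
  exact ⟨_, _, _, _, _, _, _, _, by
    rw [Matrix.inv_def, Ring.inverse_eq_inv, hrs, adjugate_qmatA, smul_qmatA]⟩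

/-- `γ = i` is not a relative norm of the extension `ℚ(i,θ)/ℚ(i)`; consequently
the cyclic algebra `𝒜 = (ℚ(i,θ)/ℚ(i), σ, i)` is a division algebra: every nonzero
element of `𝒜` has a two-sided inverse in `𝒜`. -/
theorem i_not_norm_and_division :
    (¬ ∃ p q r s : ℚ,
        (((p : ℂ) + q * Complex.I) + ((r : ℂ) + s * Complex.I) * gold) *
          (((p : ℂ) + q * Complex.I) + ((r : ℂ) + s * Complex.I) * (1 - gold))
        = Complex.I) ∧
    (∀ a b c d e f g h : ℚ, qmatA a b c d e f g h ≠ 0 →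
      ∃ a' b' c' d' e' f' g' h' : ℚ,
        qmatA a b c d e f g h * qmatA a' b' c' d' e' f' g' h' = 1 ∧
        qmatA a' b' c' d' e' f' g' h' * qmatA a b c d e f g h = 1) := by
  refine ⟨?_, fun a b c d e f g h hM ↦ ?_⟩
  · rintro ⟨p, q, r, s, h⟩
    rw [add_mul_mul_add_mul_one_sub gold_sq] at h
    exact one_ne_zero (eq_zero_of_sq_add_mul_sub_sq_eq_I_mul (ratCast_add_ratCast_mul_I_mem p q)
      (ratCast_add_ratCast_mul_I_mem r s) (one_mem _) (zero_mem _) (by linear_combination h)).2.2.1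
  · obtain ⟨a', b', c', d', e', f', g', h', hinv⟩ := exists_qmatA_eq_inv a b c d e f g h
    have hdet : IsUnit (qmatA a b c d e f g h).det := (det_qmatA_ne_zero hM).isUnit
    exact ⟨a', b', c', d', e', f', g', h', hinv ▸ mul_nonsing_inv _ hdet,
      hinv ▸ nonsing_inv_mul _ hdet⟩
end

section
/- Every nonzero codeword X of the Golden Code 𝒢 satisfies |det(X)|² ≥ 1/5, with the bound attained. -/
open Matrix

/-- Squared Frobenius norm of a 2×2 complex matrix. -/
noncomputable def fro2 (M : Matrix (Fin 2) (Fin 2) ℂ) : ℝ :=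
  ∑ i, ∑ j, ‖M i j‖ ^ 2

/-- The element `a + bθ + i(c + dθ)` of `ℤ[i,θ]`. -/
noncomputable def zit (a b c d : ℤ) : ℂ :=
  (a : ℂ) + b * gold + Complex.I * ((c : ℂ) + d * gold)

/-- Its conjugate under `θ ↦ 1 − θ`. -/
noncomputable def zitBar (a b c d : ℤ) : ℂ :=
  (a : ℂ) + b * (1 - gold) + Complex.I * ((c : ℂ) + d * (1 - gold))

/-- The matrix `[[w₁, w₂], [i·w̄₂, w̄₁]]` of the order `𝒪`, with
`w₁ = a + bθ + i(c+dθ)` and `w₂ = e + fθ + i(g+hθ)`. -/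
noncomputable def Omat (a b c d e f g h : ℤ) : Matrix (Fin 2) (Fin 2) ℂ :=
  !![zit a b c d, zit e f g h;
     Complex.I * zitBar e f g h, zitBar a b c d]

/-- Membership in the order `𝒪`. -/
def inO (W : Matrix (Fin 2) (Fin 2) ℂ) : Prop :=
  ∃ a b c d e f g h : ℤ, W = Omat a b c d e f g h

/-- `α = 1 + i·θ̄ = 1 + i(1−θ)`. -/
noncomputable def alphaG : ℂ := 1 + Complex.I * (1 - gold)

/-- `ᾱ = 1 + i·θ`. -/
noncomputable def alphaBarG : ℂ := 1 + Complex.I * gold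

/-- `A = diag(α, ᾱ)`. -/
noncomputable def Amat : Matrix (Fin 2) (Fin 2) ℂ := !![alphaG, 0; 0, alphaBarG]

/-- Membership in the Golden Code `𝒢 = (1/√5)·A·𝒪`. -/
def inG (X : Matrix (Fin 2) (Fin 2) ℂ) : Prop :=
  ∃ W, inO W ∧ X = ((Real.sqrt 5 : ℂ))⁻¹ • (Amat * W)

/-!
Write `W = [[w₁, w₂], [i·w̄₂, w̄₁]]` with `w₁, w₂ ∈ ℤ[i,θ]` and let `N(w) = w·w̄ ∈ ℤ[i]` be the
relative norm to `ℚ(i)`. Then `det W = N(w₁) - i·N(w₂)` and `det A = N(α) = 2 + i`, so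
`|det X|² = |det W|² / 5`, and everything reduces to `det W ≠ 0` for `W ≠ 0`, i.e. to `i` not
being a quotient of norms. The prime `α` over `5` is ramified with residue field `𝔽₅`, in which
`i ↦ 3` and norms become squares; as `3` is not a square mod `5`, `N(w₁) = i·N(w₂)` forces `α`
to divide both `w₁` and `w₂`. Dividing by `α` divides the equation by `2 + i`, so infinite
descent on `|N(w₁)|²` shows `N(w₁) = N(w₂) = 0`. The identity matrix attains the bound.
-/

open Complex GaussianInt Real goldenRatio

local notation "ℤ[i]" => GaussianInt

lemma gold_eq_goldenRatio : gold = (φ : ℂ) := by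
  simp [gold, goldenRatio]

lemma one_sub_gold_eq_goldenConj : 1 - gold = (ψ : ℂ) := by
  rw [gold_eq_goldenRatio, ← one_sub_goldenConj]
  push_cast
  ring

lemma gold_mul_gold : gold * gold = gold + 1 := by
  rw [gold_eq_goldenRatio, ← sq]
  exact_mod_cast goldenRatio_sq

lemma Irrational.eq_zero_of_intCast_add_intCast_mul_eq_zero {r : ℝ} (hr : Irrational r)
    {a b : ℤ} (h : (a : ℝ) + b * r = 0) : a = 0 ∧ b = 0 := by
  by_cases hb : b = 0
  · subst hb
    simpa using h
  · exact absurd h ((hr.intCast_mul hb).intCast_add a).ne_zero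

lemma Irrational.eq_zero_of_add_I_mul_eq_zero {r : ℝ} (hr : Irrational r) {a b c d : ℤ}
    (h : (a : ℂ) + b * r + I * (c + d * r) = 0) : a = 0 ∧ b = 0 ∧ c = 0 ∧ d = 0 := by
  have hre := congrArg re h
  have him := congrArg im h
  simp only [add_re, add_im, mul_re, mul_im, I_re, I_im, Complex.intCast_re, Complex.intCast_im,
    ofReal_re, ofReal_im, zero_mul, one_mul, mul_zero, sub_zero, zero_add, add_zero, zero_re,
    zero_im] at hre him
  obtain ⟨rfl, rfl⟩ := hr.eq_zero_of_intCast_add_intCast_mul_eq_zero hre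
  obtain ⟨rfl, rfl⟩ := hr.eq_zero_of_intCast_add_intCast_mul_eq_zero him
  exact ⟨rfl, rfl, rfl, rfl⟩

lemma zit_eq_zero {a b c d : ℤ} (h : zit a b c d = 0) : a = 0 ∧ b = 0 ∧ c = 0 ∧ d = 0 := by
  rw [zit, gold_eq_goldenRatio] at h
  exact goldenRatio_irrational.eq_zero_of_add_I_mul_eq_zero h

lemma zitBar_eq_zero {a b c d : ℤ} (h : zitBar a b c d = 0) :
    a = 0 ∧ b = 0 ∧ c = 0 ∧ d = 0 := by
  rw [zitBar, one_sub_gold_eq_goldenConj] at h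
  exact goldenConj_irrational.eq_zero_of_add_I_mul_eq_zero h

/-- The relative norm `w·w̄ ∈ ℤ[i]` of `w = a + bθ + i(c + dθ)`. -/
def relNorm (a b c d : ℤ) : ℤ[i] :=
  ⟨a ^ 2 + a * b - b ^ 2 - c ^ 2 - c * d + d ^ 2, 2 * a * c + a * d + b * c - 2 * b * d⟩

lemma toComplex_relNorm (a b c d : ℤ) :
    (relNorm a b c d : ℂ) = zit a b c d * zitBar a b c d := by
  rw [relNorm, toComplex_def', zit, zitBar]
  push_cast
  linear_combination ((b : ℂ) ^ 2 + 2 * I * b * d + I ^ 2 * d ^ 2) * gold_mul_gold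
    - ((c : ℂ) ^ 2 + c * d - d ^ 2) * I_mul_I

lemma relNorm_eq_zero {a b c d : ℤ} (h : relNorm a b c d = 0) :
    a = 0 ∧ b = 0 ∧ c = 0 ∧ d = 0 := by
  rw [← toComplex_eq_zero, toComplex_relNorm] at h
  rcases mul_eq_zero.mp h with h | h
  exacts [zit_eq_zero h, zitBar_eq_zero h]

def modTwoAddI : ℤ[i] →+* ZMod 5 := Zsqrtd.lift ⟨3, by decide⟩

/-- Modulo the ramified prime `α` above `2 + i`, `θ ≡ 3`, `i ≡ 3` and `w̄ ≡ w`, so the norm of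
`w` reduces to the square of the residue of `w`. -/
lemma modTwoAddI_relNorm (a b c d : ℤ) :
    modTwoAddI (relNorm a b c d) = ((a + 3 * b + 3 * c + 9 * d : ℤ) : ZMod 5) ^ 2 := by
  simp only [modTwoAddI, relNorm, Zsqrtd.lift_apply_apply]
  push_cast
  ring_nf
  reduce_mod_char
  ring

lemma five_dvd_of_relNorm_eq_I_mul {a b c d e f g h : ℤ}
    (H : relNorm a b c d = ⟨0, 1⟩ * relNorm e f g h) :
    5 ∣ a + 3 * b + 3 * c + 9 * d ∧ 5 ∣ e + 3 * f + 3 * g + 9 * h := by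
  have hmod := congrArg modTwoAddI H
  rw [map_mul, modTwoAddI_relNorm, modTwoAddI_relNorm,
    show modTwoAddI ⟨0, 1⟩ = 3 by simp [modTwoAddI]] at hmod
  have three_nonsquare : ∀ x y : ZMod 5, x ^ 2 = 3 * y ^ 2 → x = 0 ∧ y = 0 := by decide
  obtain ⟨h₁, h₂⟩ := three_nonsquare _ _ hmod
  exact ⟨(ZMod.intCast_zmod_eq_zero_iff_dvd _ 5).mp h₁,
    (ZMod.intCast_zmod_eq_zero_iff_dvd _ 5).mp h₂⟩

/-- `(a - c + d, b + c, a - b + c, d - a)` are the coordinates of `α·w`, and `αᾱ = 2 + i`. -/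
lemma relNorm_alpha_mul (a b c d : ℤ) :
    relNorm (a - c + d) (b + c) (a - b + c) (d - a) = ⟨2, 1⟩ * relNorm a b c d := by
  ext <;> simp only [relNorm, Zsqrtd.re_mul, Zsqrtd.im_mul] <;> ring

lemma exists_relNorm_eq_two_add_I_mul {a b c d : ℤ} (hs : 5 ∣ a + 3 * b + 3 * c + 9 * d) :
    ∃ a' b' c' d' : ℤ, relNorm a b c d = ⟨2, 1⟩ * relNorm a' b' c' d' := by
  obtain ⟨a', ha⟩ : 5 ∣ 2 * a + b + c - 2 * d := by omega
  obtain ⟨b', hb⟩ : 5 ∣ a + 3 * b - 2 * c - d := by omega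
  obtain ⟨c', hc⟩ : 5 ∣ -a + 2 * b + 2 * c + d := by omega
  obtain ⟨d', hd⟩ : 5 ∣ 2 * a + b + c + 3 * d := by omega
  refine ⟨a', b', c', d', ?_⟩
  rw [← relNorm_alpha_mul]
  congr 1 <;> omega

theorem relNorm_eq_zero_of_eq_I_mul {a b c d e f g h : ℤ}
    (H : relNorm a b c d = ⟨0, 1⟩ * relNorm e f g h) : relNorm a b c d = 0 := by
  induction hn : (relNorm a b c d).norm.natAbs using Nat.strong_induction_on
    generalizing a b c d e f g h with
  | _ n ih =>
  by_contra hne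
  obtain ⟨hs₁, hs₂⟩ := five_dvd_of_relNorm_eq_I_mul H
  obtain ⟨a', b', c', d', h₁⟩ := exists_relNorm_eq_two_add_I_mul hs₁
  obtain ⟨e', f', g', h', h₂⟩ := exists_relNorm_eq_two_add_I_mul hs₂
  have H' : relNorm a' b' c' d' = ⟨0, 1⟩ * relNorm e' f' g' h' := by
    rw [h₁, h₂, mul_left_comm] at H
    exact mul_left_cancel₀ (by decide) H
  have hnorm : (relNorm a b c d).norm = 5 * (relNorm a' b' c' d').norm := by
    rw [h₁, Zsqrtd.norm_mul]
    rfl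
  have hlt : (relNorm a' b' c' d').norm.natAbs < n := by
    have := norm_pos.mpr hne
    omega
  rw [h₁, ih _ hlt H' rfl, mul_zero] at hne
  exact hne rfl

lemma det_Omat (a b c d e f g h : ℤ) :
    (Omat a b c d e f g h).det = ((relNorm a b c d - ⟨0, 1⟩ * relNorm e f g h : ℤ[i]) : ℂ) := by
  rw [Omat, det_fin_two_of, map_sub, map_mul, toComplex_relNorm, toComplex_relNorm,
    toComplex_def' 0 1]
  push_cast
  ring

lemma Omat_eq_zero_of_det_eq_zero {a b c d e f g h : ℤ} (hdet : (Omat a b c d e f g h).det = 0) :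
    Omat a b c d e f g h = 0 := by
  rw [det_Omat, toComplex_eq_zero, sub_eq_zero] at hdet
  have h₁ := relNorm_eq_zero_of_eq_I_mul hdet
  have h₂ : relNorm e f g h = 0 := by
    rw [h₁, eq_comm, mul_eq_zero] at hdet
    exact hdet.resolve_left (by decide)
  obtain ⟨rfl, rfl, rfl, rfl⟩ := relNorm_eq_zero h₁
  obtain ⟨rfl, rfl, rfl, rfl⟩ := relNorm_eq_zero h₂
  ext i j
  fin_cases i <;> fin_cases j <;> simp [Omat, zit, zitBar]

lemma one_le_norm_sq_det_Omat {a b c d e f g h : ℤ} (hdet : (Omat a b c d e f g h).det ≠ 0) :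
    1 ≤ ‖(Omat a b c d e f g h).det‖ ^ 2 := by
  rw [det_Omat, ne_eq, toComplex_eq_zero] at hdet
  rw [det_Omat, Complex.sq_norm, ← intCast_real_norm]
  exact_mod_cast norm_pos.mpr hdet

lemma det_Amat : Amat.det = 2 + I := by
  rw [Amat, det_fin_two_of, alphaG, alphaBarG]
  linear_combination (-I ^ 2) * gold_mul_gold - I_mul_I

lemma norm_sq_det_smul_Amat_mul (W : Matrix (Fin 2) (Fin 2) ℂ) :
    ‖((√5 : ℂ)⁻¹ • (Amat * W)).det‖ ^ 2 = ‖W.det‖ ^ 2 / 5 := by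
  have h5 : ‖(√5 : ℂ)‖ ^ 2 = 5 := by simp
  have hA : ‖(2 + I : ℂ)‖ ^ 2 = 5 := by
    rw [Complex.sq_norm, normSq_apply]
    norm_num
  rw [det_smul, det_mul, det_Amat, norm_mul, norm_mul, norm_pow, norm_inv, Fintype.card_fin,
    mul_pow, mul_pow, inv_pow, hA, h5]
  ring

/-- Every nonzero Golden codeword satisfies `|det X|² ≥ 1/5`, and the bound is
attained. -/
theorem min_det_golden :
    (∀ X : Matrix (Fin 2) (Fin 2) ℂ, inG X → X ≠ 0 → 1 / 5 ≤ ‖X.det‖ ^ 2) ∧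
    (∃ X : Matrix (Fin 2) (Fin 2) ℂ, inG X ∧ X ≠ 0 ∧ ‖X.det‖ ^ 2 = 1 / 5) := by
  constructor
  · rintro X ⟨W, ⟨a, b, c, d, e, f, g, h, rfl⟩, rfl⟩ hX
    have hdet : (Omat a b c d e f g h).det ≠ 0 := fun h0 => hX (by
      rw [Omat_eq_zero_of_det_eq_zero h0, mul_zero, smul_zero])
    rw [norm_sq_det_smul_Amat_mul]
    linarith [one_le_norm_sq_det_Omat hdet]
  · have hone : Omat 1 0 0 0 0 0 0 0 = 1 := by
      ext i j
      fin_cases i <;> fin_cases j <;> simp [Omat, zit, zitBar]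
    have hval : ‖((√5 : ℂ)⁻¹ • (Amat * Omat 1 0 0 0 0 0 0 0)).det‖ ^ 2 = 1 / 5 := by
      rw [norm_sq_det_smul_Amat_mul, hone, det_one, norm_one, one_pow]
    refine ⟨_, ⟨_, ⟨1, 0, 0, 0, 0, 0, 0, 0, rfl⟩, rfl⟩, fun h0 => ?_, hval⟩
    rw [h0, det_zero] at hval
    norm_num at hval
end

section
/- The quotient ring 𝒪/2𝒪 is isomorphic to the ring M₂(𝔽₂[i]) of 2×2 matrices over the ring 𝔽₂[i] = (ℤ[i])/(2); an isomorphism is determined by [1] ↦ I, [θ] ↦ [[1+i,1],[i,i]], [j] ↦ [[0,1],[i,0]], [θj] ↦ their product. -/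
/-!
Sending `θ, j, θj` to the quaternion units `i, j, k` identifies `𝒪` with the order
`ℍ[ℤ[i], 1, 1, i]` (`θ² = 1 + θ`, `j² = i`, `jθ = θ̄j = j - θj`); the identification is injective
because `2θ - 1 ≠ 0`. Over `𝔽₂[i]` the matrices `[[1+i,1],[i,i]]` and `[[0,1],[i,0]]` satisfy the
same three relations, so they define a homomorphism from this order to `M₂(𝔽₂[i])`. Its matrix
entries are the images of the four reduced `ℤ[i]`-coordinates under an invertible
`𝔽₂[i]`-linear map, so it is surjective with kernel `2𝒪`.
-/

open Matrix

/-- The matrix of `θ` under the embedding of the quaternion algebra in `M₂(ℂ)`. -/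
noncomputable def Tmat : Matrix (Fin 2) (Fin 2) ℂ := !![gold, 0; 0, 1 - gold]

/-- The matrix of `j` (with `j² = i`, `jx = x̄j`). -/
noncomputable def Jmat : Matrix (Fin 2) (Fin 2) ℂ := !![0, 1; Complex.I, 0]

/-- The matrix of the central element `i`. -/
noncomputable def iOne : Matrix (Fin 2) (Fin 2) ℂ := Complex.I • (1 : Matrix (Fin 2) (Fin 2) ℂ)

/-- The order `𝒪 = ℤ[i,θ] ⊕ ℤ[i,θ]j`, as the subring of `M₂(ℂ)` generated by
`i·𝟙`, `θ` and `j`. -/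
noncomputable def OO : Subring (Matrix (Fin 2) (Fin 2) ℂ) :=
  Subring.closure {iOne, Tmat, Jmat}

/-- The ring `𝔽₂[i] = ℤ[i]/(2)`. -/
abbrev F2i : Type := GaussianInt ⧸ (Ideal.span {(2 : GaussianInt)})

/-- The class of `i` in `𝔽₂[i]`. -/
noncomputable def iF2i : F2i := Ideal.Quotient.mk _ (⟨0, 1⟩ : GaussianInt)

open Quaternion

noncomputable instance : Algebra GaussianInt ℂ := GaussianInt.toComplex.toAlgebra

local notation "𝐢" => (Zsqrtd.sqrtd : GaussianInt)

local notation "π" => Ideal.Quotient.mk (Ideal.span {(2 : GaussianInt)})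

abbrev QuatO : Type := ℍ[GaussianInt, 1, 1, 𝐢]

namespace QuaternionAlgebra.Basis

variable {R A : Type*} [CommRing R] [Ring A] [Algebra R A] {c₁ c₂ c₃ : R}

lemma liftHom_self_i (q : Basis A c₁ c₂ c₃) : q.liftHom (Basis.self R).i = q.i := by
  simp [lift]

lemma liftHom_self_j (q : Basis A c₁ c₂ c₃) : q.liftHom (Basis.self R).j = q.j := by
  simp [lift]

lemma liftHom_self_k (q : Basis A c₁ c₂ c₃) : q.liftHom (Basis.self R).k = q.k := by
  simp [lift]

end QuaternionAlgebra.Basis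

lemma gold_mul_self : gold * gold = 1 + gold := by
  have h5 : ((Real.sqrt 5 : ℝ) : ℂ) ^ 2 = 5 := by
    rw [← Complex.ofReal_pow, Real.sq_sqrt (by norm_num : (5 : ℝ) ≥ 0)]
    norm_num
  unfold gold
  linear_combination (1 / 4 : ℂ) * h5

lemma two_mul_gold_sub_one_ne_zero : 2 * gold - 1 ≠ 0 := by
  intro h
  have hsq : (2 * gold - 1) ^ 2 = 5 := by linear_combination 4 * gold_mul_self
  norm_num [h] at hsq

lemma eq_zero_of_add_mul_gold {a b : ℂ} (h : a + b * gold = 0) (h' : a + b * (1 - gold) = 0) :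
    a = 0 ∧ b = 0 := by
  have hb : b = 0 := by
    have : b * (2 * gold - 1) = 0 := by linear_combination h - h'
    exact (mul_eq_zero.mp this).resolve_right two_mul_gold_sub_one_ne_zero
  exact ⟨by simpa [hb] using h, hb⟩

lemma algebraMap_sqrtd_eq_iOne :
    algebraMap GaussianInt (Matrix (Fin 2) (Fin 2) ℂ) 𝐢 = iOne := by
  ext i j
  fin_cases i <;> fin_cases j <;>
    simp [iOne, Matrix.algebraMap_eq_diagonal, RingHom.algebraMap_toAlgebra,
      GaussianInt.toComplex_def]

noncomputable def basisO : QuaternionAlgebra.Basis (Matrix (Fin 2) (Fin 2) ℂ)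
    (1 : GaussianInt) 1 𝐢 where
  i := Tmat
  j := Jmat
  k := Tmat * Jmat
  i_mul_i := by
    ext i j
    fin_cases i <;> fin_cases j <;> simp [Tmat] <;> linear_combination gold_mul_self
  j_mul_j := by
    rw [← Algebra.algebraMap_eq_smul_one, algebraMap_sqrtd_eq_iOne]
    ext i j
    fin_cases i <;> fin_cases j <;> simp [Jmat, iOne]
  i_mul_j := rfl
  j_mul_i := by
    ext i j
    fin_cases i <;> fin_cases j <;> simp [Tmat, Jmat]; ring

noncomputable def reprO : QuatO →ₐ[GaussianInt] Matrix (Fin 2) (Fin 2) ℂ := basisO.liftHom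

lemma reprO_apply (q : QuatO) : reprO q =
    !![(q.re : ℂ) + q.imI * gold, q.imJ + q.imK * gold;
      Complex.I * (q.imJ + q.imK * (1 - gold)), q.re + q.imI * (1 - gold)] := by
  ext i j
  fin_cases i <;> fin_cases j <;>
    simp [reprO, QuaternionAlgebra.Basis.lift, basisO, Tmat, Jmat, Algebra.smul_def,
      RingHom.algebraMap_toAlgebra, Matrix.algebraMap_eq_diagonal]; ring

lemma reprO_injective : Function.Injective reprO := by
  refine (injective_iff_map_eq_zero reprO).mpr fun q hq => ?_
  rw [reprO_apply, ← Matrix.ext_iff] at hq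
  simp only [of_apply, cons_val', cons_val_fin_one, cons_val_zero, cons_val_one, Matrix.zero_apply,
    Fin.forall_fin_two, mul_eq_zero, Complex.I_ne_zero, false_or] at hq
  obtain ⟨⟨e₀₀, e₀₁⟩, e₁₀, e₁₁⟩ := hq
  obtain ⟨ha, hb⟩ := eq_zero_of_add_mul_gold e₀₀ e₁₁
  obtain ⟨hc, hd⟩ := eq_zero_of_add_mul_gold e₀₁ e₁₀
  simp only [GaussianInt.toComplex_eq_zero] at ha hb hc hd
  exact QuaternionAlgebra.ext ha hb hc hd

lemma algebraMap_mem_OO (a : GaussianInt) :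
    algebraMap GaussianInt (Matrix (Fin 2) (Fin 2) ℂ) a ∈ OO := by
  rw [show a = (a.re : GaussianInt) + 𝐢 * (a.im : GaussianInt) from Zsqrtd.decompose, map_add,
    map_mul, map_intCast, map_intCast, algebraMap_sqrtd_eq_iOne]
  exact add_mem (intCast_mem _ _) (mul_mem (Subring.subset_closure (by simp)) (intCast_mem _ _))

lemma reprO_mem (q : QuatO) : reprO q ∈ OO := by
  have hT : Tmat ∈ OO := Subring.subset_closure (by simp)
  have hJ : Jmat ∈ OO := Subring.subset_closure (by simp)
  simp only [reprO, QuaternionAlgebra.Basis.liftHom_apply, QuaternionAlgebra.Basis.lift,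
    Algebra.smul_def]
  exact add_mem (add_mem (add_mem (algebraMap_mem_OO _) (mul_mem (algebraMap_mem_OO _) hT))
    (mul_mem (algebraMap_mem_OO _) hJ)) (mul_mem (algebraMap_mem_OO _) (mul_mem hT hJ))

lemma range_reprO : reprO.toRingHom.range = OO := by
  refine le_antisymm (fun _ ⟨q, hq⟩ => hq ▸ reprO_mem q) (Subring.closure_le.mpr ?_)
  rintro x (rfl | rfl | rfl)
  · exact ⟨algebraMap _ _ 𝐢, (reprO.commutes _).trans algebraMap_sqrtd_eq_iOne⟩
  · exact ⟨(QuaternionAlgebra.Basis.self GaussianInt).i, basisO.liftHom_self_i⟩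
  · exact ⟨(QuaternionAlgebra.Basis.self GaussianInt).j, basisO.liftHom_self_j⟩

noncomputable def quatEquivOO : QuatO ≃+* OO :=
  RingEquiv.ofBijective (reprO.toRingHom.codRestrict OO reprO_mem)
    ⟨fun _ _ h => reprO_injective (congrArg Subtype.val h), fun x => by
      obtain ⟨q, hq⟩ := RingHom.mem_range.mp
        (range_reprO.symm ▸ x.2 : (x : Matrix (Fin 2) (Fin 2) ℂ) ∈ reprO.toRingHom.range)
      exact ⟨q, Subtype.ext hq⟩⟩

@[simp]
lemma coe_quatEquivOO (q : QuatO) : (quatEquivOO q : Matrix (Fin 2) (Fin 2) ℂ) = reprO q := rfl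

lemma exists_reprO_eq_two_smul_iff (q : QuatO) :
    (∃ y : OO, reprO q = (2 : ℂ) • (y : Matrix (Fin 2) (Fin 2) ℂ)) ↔ ∃ q', q = 2 * q' := by
  have reprO_two_mul (q' : QuatO) : reprO (2 * q') = (2 : ℂ) • reprO q' := by
    rw [map_mul, map_ofNat, two_mul, two_smul]
  constructor
  · rintro ⟨y, hy⟩
    obtain ⟨q', rfl⟩ := quatEquivOO.surjective y
    exact ⟨q', reprO_injective (hy.trans (reprO_two_mul q').symm)⟩
  · rintro ⟨q', rfl⟩
    exact ⟨quatEquivOO q', reprO_two_mul q'⟩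

lemma iF2i_mul_self : iF2i * iF2i = -1 := by
  rw [iF2i, ← map_mul, ← map_one (Ideal.Quotient.mk _), ← map_neg]
  rfl

lemma two_eq_zero_F2i : (2 : F2i) = 0 := by
  rw [← map_ofNat (Ideal.Quotient.mk _) 2, Ideal.Quotient.eq_zero_iff_mem]
  exact Ideal.subset_span rfl

lemma algebraMap_sqrtd_eq_iF2i :
    algebraMap GaussianInt (Matrix (Fin 2) (Fin 2) F2i) 𝐢 = !![iF2i, 0; 0, iF2i] := by
  ext i j
  fin_cases i <;> fin_cases j <;> rfl

noncomputable def basisF2i : QuaternionAlgebra.Basis (Matrix (Fin 2) (Fin 2) F2i)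
    (1 : GaussianInt) 1 𝐢 where
  i := !![1 + iF2i, 1; iF2i, iF2i]
  j := !![0, 1; iF2i, 0]
  k := !![iF2i, 1 + iF2i; -1, iF2i]
  i_mul_i := by
    ext i j
    fin_cases i <;> fin_cases j <;> simp <;> grind [iF2i_mul_self, two_eq_zero_F2i]
  j_mul_j := by
    rw [← Algebra.algebraMap_eq_smul_one, algebraMap_sqrtd_eq_iF2i]
    ext i j
    fin_cases i <;> fin_cases j <;> simp
  i_mul_j := by
    ext i j
    fin_cases i <;> fin_cases j <;> simp [iF2i_mul_self]
  j_mul_i := by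
    ext i j
    fin_cases i <;> fin_cases j <;> simp <;> grind [iF2i_mul_self, two_eq_zero_F2i]

noncomputable def reduceO : QuatO →ₐ[GaussianInt] Matrix (Fin 2) (Fin 2) F2i := basisF2i.liftHom

lemma reduceO_apply (q : QuatO) : reduceO q =
    !![π q.re + π q.imI * (1 + iF2i) + π q.imK * iF2i, π q.imI + π q.imJ + π q.imK * (1 + iF2i);
      π q.imI * iF2i + π q.imJ * iF2i - π q.imK, π q.re + π q.imI * iF2i + π q.imK * iF2i] := by
  ext i j
  fin_cases i <;> fin_cases j <;>
    simp [reduceO, QuaternionAlgebra.Basis.lift, basisF2i, Algebra.smul_def,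
      Matrix.algebraMap_eq_diagonal, sub_eq_add_neg]

lemma reduceO_surjective : Function.Surjective reduceO := by
  intro M
  obtain ⟨g₀₀, h₀₀⟩ := Ideal.Quotient.mk_surjective (M 0 0)
  obtain ⟨g₀₁, h₀₁⟩ := Ideal.Quotient.mk_surjective (M 0 1)
  obtain ⟨g₁₀, h₁₀⟩ := Ideal.Quotient.mk_surjective (M 1 0)
  obtain ⟨g₁₁, h₁₁⟩ := Ideal.Quotient.mk_surjective (M 1 1)
  -- the inverse of the linear system in `reduceO_apply`
  refine ⟨⟨g₁₁ - (g₀₀ - g₁₁) * 𝐢 - (g₀₁ + 𝐢 * g₁₀) * 𝐢, g₀₀ - g₁₁,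
    g₀₁ - (g₀₀ - g₁₁) - (g₀₁ + 𝐢 * g₁₀) * (1 + 𝐢), g₀₁ + 𝐢 * g₁₀⟩, ?_⟩
  have hi : π 𝐢 = iF2i := rfl
  rw [reduceO_apply, Matrix.eta_fin_two M, ← h₀₀, ← h₀₁, ← h₁₀, ← h₁₁]
  ext i j
  fin_cases i <;> fin_cases j <;> simp [hi] <;> grind [iF2i_mul_self]

lemma coords_eq_zero_of_reduceO_eq_zero {q : QuatO} (hq : reduceO q = 0) :
    π q.re = 0 ∧ π q.imI = 0 ∧ π q.imJ = 0 ∧ π q.imK = 0 := by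
  rw [reduceO_apply, ← Matrix.ext_iff] at hq
  simp only [of_apply, cons_val', cons_val_fin_one, cons_val_zero, cons_val_one, Matrix.zero_apply,
    Fin.forall_fin_two] at hq
  obtain ⟨⟨e₀₀, e₀₁⟩, e₁₀, e₁₁⟩ := hq
  have hb : π q.imI = 0 := by linear_combination e₀₀ - e₁₁
  have hd : π q.imK = 0 := by
    linear_combination (-iF2i) * (iF2i * e₀₁ - e₁₀) + π q.imK * (1 + iF2i) * iF2i_mul_self
  refine ⟨?_, hb, ?_, hd⟩
  · linear_combination e₁₁ - iF2i * hb - iF2i * hd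
  · linear_combination e₀₁ - hb - (1 + iF2i) * hd

lemma reduceO_eq_zero_iff (q : QuatO) : reduceO q = 0 ↔ ∃ q', q = 2 * q' := by
  constructor
  · intro hq
    obtain ⟨ha, hb, hc, hd⟩ := coords_eq_zero_of_reduceO_eq_zero hq
    obtain ⟨a, ha⟩ := (Ideal.Quotient.eq_zero_iff_dvd _ _).mp ha
    obtain ⟨b, hb⟩ := (Ideal.Quotient.eq_zero_iff_dvd _ _).mp hb
    obtain ⟨c, hc⟩ := (Ideal.Quotient.eq_zero_iff_dvd _ _).mp hc
    obtain ⟨d, hd⟩ := (Ideal.Quotient.eq_zero_iff_dvd _ _).mp hd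
    refine ⟨⟨a, b, c, d⟩, ?_⟩
    ext : 1 <;> simp [ha, hb, hc, hd, two_mul]
  · rintro ⟨q', rfl⟩
    rw [map_mul, map_ofNat, ← map_ofNat (algebraMap F2i (Matrix (Fin 2) (Fin 2) F2i)) 2,
      two_eq_zero_F2i, map_zero, zero_mul]

/-- The quotient `𝒪/2𝒪` is isomorphic to `M₂(𝔽₂[i])`: there is a surjective ring
homomorphism `ψ : 𝒪 → M₂(𝔽₂[i])` whose kernel is exactly `2𝒪`, determined by
`θ ↦ [[1+i,1],[i,i]]`, `j ↦ [[0,1],[i,0]]` (hence `θj` maps to their product, and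
`i·𝟙` to `i·I`). -/
theorem quotient_O_two :
    ∃ ψ : OO →+* Matrix (Fin 2) (Fin 2) F2i,
      Function.Surjective ψ ∧
      (∀ x : OO, ψ x = 0 ↔ ∃ y : OO,
        (x : Matrix (Fin 2) (Fin 2) ℂ) = (2 : ℂ) • (y : Matrix (Fin 2) (Fin 2) ℂ)) ∧
      (∀ h : Tmat ∈ OO, ψ ⟨Tmat, h⟩ = !![1 + iF2i, 1; iF2i, iF2i]) ∧
      (∀ h : Jmat ∈ OO, ψ ⟨Jmat, h⟩ = !![0, 1; iF2i, 0]) ∧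
      (∀ h : Tmat * Jmat ∈ OO,
        ψ ⟨Tmat * Jmat, h⟩ = !![1 + iF2i, 1; iF2i, iF2i] * !![0, 1; iF2i, 0]) ∧
      (∀ h : iOne ∈ OO, ψ ⟨iOne, h⟩ = !![iF2i, 0; 0, iF2i]) := by
  let ψ := (reduceO : QuatO →+* Matrix (Fin 2) (Fin 2) F2i).comp quatEquivOO.symm.toRingHom
  have ψ_mk {q : QuatO} {x : Matrix (Fin 2) (Fin 2) ℂ} (hx : x ∈ OO) (hq : reprO q = x) :
      ψ ⟨x, hx⟩ = reduceO q := by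
    rw [show (⟨x, hx⟩ : OO) = quatEquivOO q from Subtype.ext hq.symm]
    simp [ψ]
  refine ⟨ψ, reduceO_surjective.comp quatEquivOO.symm.surjective, fun x => ?_,
    fun h => (ψ_mk h basisO.liftHom_self_i).trans basisF2i.liftHom_self_i,
    fun h => (ψ_mk h basisO.liftHom_self_j).trans basisF2i.liftHom_self_j,
    fun h => (ψ_mk h basisO.liftHom_self_k).trans
      (basisF2i.liftHom_self_k.trans basisF2i.i_mul_j.symm),
    fun h => (ψ_mk h ((reprO.commutes _).trans algebraMap_sqrtd_eq_iOne)).trans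
      ((reduceO.commutes _).trans algebraMap_sqrtd_eq_iF2i)⟩
  obtain ⟨q, rfl⟩ := quatEquivOO.surjective x
  simpa [ψ] using
    (reduceO_eq_zero_iff q).trans (exists_reprO_eq_two_smul_iff q).symm
end
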